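/- In the nonlinear vector model, the disseminated strong-order probability satisfies 𝔭_β(G_so) ≤ (1/π) e^{2β}/(C√p), where G_so is the event that all four bonds of a unit plaquette are strongly ordered. -/

import Mathlib

/-! Strong order forces every site outside the column `x.1 = 0` to lie within `δ = 1/(C√p)` of
its left neighbour. Integrating the sites out one at a time, from the rightmost column leftwards,
each costs at most the length `2δ` of an interval, so strong order has a priori measure at most
`(2δ)^(L²-L) (2π)^L`. Since `0 ≤ -H ≤ 2L²`, the Boltzmann weight lies in `[1, e^{2βL²}]`, whence
`Z_L ≥ (2π)^{L²}` and `Z_L^{so} ≤ e^{2βL²} (2δ)^(L²-L) (2π)^L`. The `L²`-th root of the ratio is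
then at most `e^{2β} (δ/π)^(1-1/L)`, which tends to `e^{2β} δ/π`. -/

open Real MeasureTheory Filter

noncomputable section

/-- The sites of the 2D torus `T_L`. -/
abbrev TorusSite (L : ℕ) := ZMod L × ZMod L

/-- The a priori measure: product over the sites of Lebesgue measure on `(-π, π]`. -/
def torusMeasure (L : ℕ) [NeZero L] : Measure (TorusSite L → ℝ) :=
  Measure.pi (fun _ => volume.restrict (Set.Ioc (-π) π))

/-- Hamiltonian of the nonlinear vector model. -/
def nlHam (L p : ℕ) [NeZero L] (φ : TorusSite L → ℝ) : ℝ :=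
  -∑ x : TorusSite L,
    (((1 + cos (φ x - φ (x + (1, 0)))) / 2) ^ p +
      ((1 + cos (φ x - φ (x + (0, 1)))) / 2) ^ p)

/-- Full torus partition function. -/
def Zfull (L p : ℕ) [NeZero L] (β : ℝ) : ℝ :=
  ∫ φ : TorusSite L → ℝ, Real.exp (-(β * nlHam L p φ)) ∂(torusMeasure L)

/-- Partition function restricted to all bonds strongly ordered. -/
def Zso (L p : ℕ) [NeZero L] (β C : ℝ) : ℝ :=
  ∫ φ in {φ : TorusSite L → ℝ | ∀ x : TorusSite L,
      |φ x - φ (x + (1, 0))| ≤ 1 / (C * Real.sqrt p) ∧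
      |φ x - φ (x + (0, 1))| ≤ 1 / (C * Real.sqrt p)},
    Real.exp (-(β * nlHam L p φ)) ∂(torusMeasure L)

open Finset Function Topology
open scoped ENNReal

lemma lmarginal_const_mul {δ : Type*} {X : δ → Type*} [∀ i, MeasurableSpace (X i)]
    {μ : ∀ i, Measure (X i)} [DecidableEq δ] (s : Finset δ) (c : ℝ≥0∞)
    {f : (∀ i, X i) → ℝ≥0∞} (hf : Measurable f) :
    ∫⋯∫⁻_s, (fun x => c * f x) ∂μ = fun x => c * (∫⋯∫⁻_s, f ∂μ) x :=
  funext fun _ => lintegral_const_mul c (hf.comp measurable_updateFinset)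

section NearParent

variable {ι : Type*} (g : ι → ι) (δ : ℝ)

def nearParentSet (t : Finset ι) : Set (ι → ℝ) :=
  {f | ∀ x ∈ t, |f x - f (g x)| ≤ δ}

lemma measurableSet_nearParentSet (t : Finset ι) : MeasurableSet (nearParentSet g δ t) := by
  simp only [nearParentSet, Set.ofPred_forall]
  exact .biInter t.countable_toSet fun x _ => measurableSet_le (by fun_prop) measurable_const

variable [DecidableEq ι]

lemma update_mem_nearParentSet_insert_iff {t : Finset ι} {x : ι} (hxt : x ∉ t) (hgx : g x ≠ x)
    (hparent : ∀ z ∈ t, g z ≠ x) (y : ι → ℝ) (s : ℝ) :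
    update y x s ∈ nearParentSet g δ (insert x t) ↔
      y ∈ nearParentSet g δ t ∧ s ∈ Metric.closedBall (y (g x)) δ := by
  simp only [nearParentSet, Set.mem_ofPred_eq, forall_mem_insert, update_self, update_of_ne hgx,
    Metric.mem_closedBall, Real.dist_eq, and_comm (a := |s - y (g x)| ≤ δ)]
  refine and_congr_left' (forall₂_congr fun z hz => ?_)
  rw [update_of_ne (ne_of_mem_of_not_mem hz hxt), update_of_ne (hparent z hz)]

lemma lmarginal_nearParentSet_insert_le (μ₀ : Measure ℝ) [SigmaFinite μ₀] {c : ℝ≥0∞}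
    (hc : ∀ a, μ₀ (Metric.closedBall a δ) ≤ c) {t : Finset ι} {x : ι} (hxt : x ∉ t)
    (hgx : g x ≠ x) (hparent : ∀ z ∈ t, g z ≠ x) :
    ∫⋯∫⁻_(insert x t), (nearParentSet g δ (insert x t)).indicator 1 ∂(fun _ => μ₀) ≤
      fun y => c * (∫⋯∫⁻_t, (nearParentSet g δ t).indicator 1 ∂(fun _ => μ₀)) y := by
  have hmeas := measurableSet_nearParentSet g δ
  have hslice : ∀ y s,
      (nearParentSet g δ (insert x t)).indicator (1 : (ι → ℝ) → ℝ≥0∞) (update y x s) =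
        (nearParentSet g δ t).indicator 1 y * (Metric.closedBall (y (g x)) δ).indicator 1 s := by
    intro y s
    classical
    simp only [Set.indicator_apply, update_mem_nearParentSet_insert_iff g δ hxt hgx hparent,
      Pi.one_apply]
    split_ifs <;> simp_all
  rw [lmarginal_insert' _ (measurable_one.indicator (hmeas _)) hxt,
    ← lmarginal_const_mul _ _ (measurable_one.indicator (hmeas _))]
  refine lmarginal_mono fun y => ?_
  simp only [hslice]
  rw [lintegral_const_mul _ (measurable_one.indicator Metric.isClosed_closedBall.measurableSet),
    lintegral_indicator_one Metric.isClosed_closedBall.measurableSet, mul_comm]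
  gcongr
  exact hc _

lemma lmarginal_nearParentSet_le (μ₀ : Measure ℝ) [SigmaFinite μ₀] {c : ℝ≥0∞}
    (hc : ∀ a, μ₀ (Metric.closedBall a δ) ≤ c) {α : Type*} [LinearOrder α] (r : ι → α)
    (t : Finset ι) (hr : ∀ x ∈ t, r (g x) < r x) :
    ∫⋯∫⁻_t, (nearParentSet g δ t).indicator 1 ∂(fun _ => μ₀) ≤ fun _ => c ^ #t := by
  induction t using Finset.induction_on_max_value r with
  | empty =>
    simp only [lmarginal_empty, card_empty, pow_zero]
    exact Set.indicator_le fun _ _ => le_rfl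
  | insert x t hxt hmax ih =>
    have hgx : g x ≠ x := fun h => (hr x (mem_insert_self x t)).ne (congrArg r h)
    have hparent : ∀ z ∈ t, g z ≠ x := fun z hz h =>
      ((hr z (mem_insert_of_mem hz)).trans_le (hmax z hz)).ne (congrArg r h)
    intro y
    calc _ ≤ c * (∫⋯∫⁻_t, (nearParentSet g δ t).indicator 1 ∂(fun _ => μ₀)) y :=
          lmarginal_nearParentSet_insert_le g δ μ₀ hc hxt hgx hparent y
      _ ≤ c * c ^ #t := by gcongr; exact ih (fun z hz => hr z (mem_insert_of_mem hz)) y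
      _ = c ^ #(insert x t) := by rw [card_insert_of_notMem hxt, pow_succ']

lemma measure_pi_nearParentSet_le [Fintype ι] (μ₀ : Measure ℝ) [SigmaFinite μ₀] {c : ℝ≥0∞}
    (hc : ∀ a, μ₀ (Metric.closedBall a δ) ≤ c) {α : Type*} [LinearOrder α] (r : ι → α)
    (t : Finset ι) (hr : ∀ x ∈ t, r (g x) < r x) :
    Measure.pi (fun _ => μ₀) (nearParentSet g δ t) ≤ c ^ #t * μ₀ Set.univ ^ #tᶜ := by
  have hf : Measurable ((nearParentSet g δ t).indicator (1 : (ι → ℝ) → ℝ≥0∞)) :=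
    measurable_one.indicator (measurableSet_nearParentSet g δ t)
  rw [← lintegral_indicator_one (measurableSet_nearParentSet g δ t),
    lintegral_eq_lmarginal_univ (0 : ι → ℝ), ← union_compl t,
    lmarginal_union' _ _ hf disjoint_compl_right]
  calc _ ≤ (∫⋯∫⁻_tᶜ, (fun _ => c ^ #t) ∂(fun _ => μ₀)) 0 :=
        lmarginal_mono (lmarginal_nearParentSet_le g δ μ₀ hc r t hr) 0
    _ = c ^ #t * μ₀ Set.univ ^ #tᶜ := by
        rw [lmarginal, lintegral_const, Measure.pi_univ, prod_const, card_univ, Fintype.card_coe]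

end NearParent

lemma ZMod.val_sub_one_lt {n : ℕ} [NeZero n] {a : ZMod n} (ha : a ≠ 0) : (a - 1).val < a.val := by
  have h1 : (1 : ZMod n) ≠ 0 := fun h => ha (by simpa using congrArg (a * ·) h)
  have hle : (1 : ZMod n).val ≤ a.val :=
    (ZMod.val_one_eq_one_mod n).trans_le ((Nat.mod_le _ _).trans (ZMod.val_pos.2 ha))
  rw [ZMod.val_sub hle]
  have := ZMod.val_pos.2 h1
  omega

lemma volume_restrict_Ioc_neg_pi_pi_univ :
    volume.restrict (Set.Ioc (-π) π) Set.univ = .ofReal (2 * π) := by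
  rw [Measure.restrict_apply_univ, Real.volume_Ioc, sub_neg_eq_add, two_mul]

section Torus

variable (L : ℕ) [NeZero L]

instance : IsFiniteMeasure (torusMeasure L) := by
  unfold torusMeasure; infer_instance

lemma card_torusSite : Fintype.card (TorusSite L) = L ^ 2 := by
  simp [ZMod.card, sq]

lemma card_filter_fst_eq_zero : #{x : TorusSite L | x.1 = 0} = L := by
  have h : ({x : TorusSite L | x.1 = 0} : Finset _) = {0} ×ˢ univ := by
    ext ⟨a, b⟩; simp [eq_comm]
  simp [h, ZMod.card]

lemma measureReal_torusMeasure_univ : (torusMeasure L).real Set.univ = (2 * π) ^ (L ^ 2) := by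
  rw [measureReal_def, torusMeasure, Measure.pi_univ, volume_restrict_Ioc_neg_pi_pi_univ,
    prod_const, card_univ, card_torusSite, ENNReal.toReal_pow,
    ENNReal.toReal_ofReal (by positivity)]

def strongOrderSet (δ : ℝ) : Set (TorusSite L → ℝ) :=
  {φ | ∀ x, |φ x - φ (x + (1, 0))| ≤ δ ∧ |φ x - φ (x + (0, 1))| ≤ δ}

lemma strongOrderSet_subset_nearParentSet (δ : ℝ) :
    strongOrderSet L δ ⊆ nearParentSet (· - (1, 0)) δ {x : TorusSite L | x.1 ≠ 0} := by
  intro φ hφ x _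
  have h := (hφ (x - (1, 0))).1
  rwa [sub_add_cancel, abs_sub_comm] at h

lemma measureReal_strongOrderSet_le {δ : ℝ} (hδ : 0 ≤ δ) :
    (torusMeasure L).real (strongOrderSet L δ) ≤ (2 * δ) ^ (L ^ 2 - L) * (2 * π) ^ L := by
  have hball : ∀ a, volume.restrict (Set.Ioc (-π) π) (Metric.closedBall a δ) ≤ .ofReal (2 * δ) :=
    fun a => (Measure.restrict_le_self _).trans_eq (Real.volume_closedBall a δ)
  have hrank : ∀ x ∈ ({x : TorusSite L | x.1 ≠ 0} : Finset _), (x - (1, 0)).1.val < x.1.val :=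
    fun x hx => ZMod.val_sub_one_lt (mem_filter.1 hx).2
  have hcard : #({x : TorusSite L | x.1 ≠ 0} : Finset _) = L ^ 2 - L := by
    have h := card_filter_add_card_filter_not (s := univ) (fun x : TorusSite L => x.1 = 0)
    simp only [card_univ, card_torusSite, card_filter_fst_eq_zero, ← ne_eq] at h
    omega
  have h := (measure_mono (strongOrderSet_subset_nearParentSet L δ)).trans
    (measure_pi_nearParentSet_le _ δ _ hball (fun x : TorusSite L => x.1.val) _ hrank)
  rw [compl_filter, hcard, volume_restrict_Ioc_neg_pi_pi_univ] at h
  simp_rw [not_not, card_filter_fst_eq_zero] at h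
  rw [measureReal_def]
  refine (ENNReal.toReal_mono (by finiteness) h).trans_eq ?_
  rw [ENNReal.toReal_mul, ENNReal.toReal_pow, ENNReal.toReal_pow,
    ENNReal.toReal_ofReal (by positivity), ENNReal.toReal_ofReal (by positivity)]

end Torus

section PartitionFunction

variable (L p : ℕ) [NeZero L]

lemma nlHam_mem_Icc (φ : TorusSite L → ℝ) : nlHam L p φ ∈ Set.Icc (-(2 * L ^ 2 : ℝ)) 0 := by
  have hbond : ∀ θ : ℝ, ((1 + cos θ) / 2) ^ p ∈ Set.Icc (0 : ℝ) 1 := fun θ =>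
    ⟨pow_nonneg (by linarith [neg_one_le_cos θ]) p,
      pow_le_one₀ (by linarith [neg_one_le_cos θ]) (by linarith [cos_le_one θ])⟩
  have hsum := Finset.sum_le_card_nsmul univ (fun x =>
      ((1 + cos (φ x - φ (x + (1, 0)))) / 2) ^ p + ((1 + cos (φ x - φ (x + (0, 1)))) / 2) ^ p)
    2 fun x _ => by linarith [(hbond (φ x - φ (x + (1, 0)))).2, (hbond (φ x - φ (x + (0, 1)))).2]
  rw [card_univ, card_torusSite, nsmul_eq_mul] at hsum
  push_cast at hsum
  refine ⟨by rw [nlHam]; linarith, neg_nonpos.2 (sum_nonneg fun x _ => ?_)⟩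
  linarith [(hbond (φ x - φ (x + (1, 0)))).1, (hbond (φ x - φ (x + (0, 1)))).1]

variable {β : ℝ}

lemma one_le_boltzmann (hβ : 0 ≤ β) (φ : TorusSite L → ℝ) : 1 ≤ exp (-(β * nlHam L p φ)) :=
  one_le_exp (neg_nonneg.2 (mul_nonpos_of_nonneg_of_nonpos hβ (nlHam_mem_Icc L p φ).2))

lemma boltzmann_le (hβ : 0 ≤ β) (φ : TorusSite L → ℝ) :
    exp (-(β * nlHam L p φ)) ≤ exp (2 * β * L ^ 2) :=
  exp_le_exp.2 (by nlinarith [(nlHam_mem_Icc L p φ).1])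

lemma integrable_boltzmann (hβ : 0 ≤ β) :
    Integrable (fun φ => exp (-(β * nlHam L p φ))) (torusMeasure L) := by
  refine .of_bound (by unfold nlHam; fun_prop : Continuous _).aestronglyMeasurable
    (exp (2 * β * L ^ 2)) (ae_of_all _ fun φ => ?_)
  rw [norm_of_nonneg (exp_pos _).le]
  exact boltzmann_le L p hβ φ

lemma pow_two_pi_le_Zfull (hβ : 0 ≤ β) : (2 * π) ^ (L ^ 2) ≤ Zfull L p β :=
  calc (2 * π) ^ (L ^ 2) = ∫ _ : TorusSite L → ℝ, (1 : ℝ) ∂torusMeasure L := by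
        rw [integral_const, measureReal_torusMeasure_univ, smul_eq_mul, mul_one]
    _ ≤ Zfull L p β :=
        integral_mono (integrable_const 1) (integrable_boltzmann L p hβ) (one_le_boltzmann L p hβ)

lemma Zso_eq_setIntegral_strongOrderSet (C : ℝ) : Zso L p β C =
    ∫ φ in strongOrderSet L (1 / (C * √p)), exp (-(β * nlHam L p φ)) ∂torusMeasure L := rfl

lemma Zso_nonneg (C : ℝ) : 0 ≤ Zso L p β C :=
  integral_nonneg fun _ => (exp_pos _).le

lemma Zso_div_Zfull_nonneg (hβ : 0 ≤ β) (C : ℝ) : 0 ≤ Zso L p β C / Zfull L p β :=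
  div_nonneg (Zso_nonneg L p C) ((by positivity : (0 : ℝ) ≤ _).trans (pow_two_pi_le_Zfull L p hβ))

lemma Zso_le_measureReal_mul_exp (hβ : 0 ≤ β) (C : ℝ) : Zso L p β C ≤
    (torusMeasure L).real (strongOrderSet L (1 / (C * √p))) * exp (2 * β * L ^ 2) := by
  rw [Zso_eq_setIntegral_strongOrderSet]
  refine (setIntegral_mono (integrable_boltzmann L p hβ).integrableOn integrableOn_const
    (boltzmann_le L p hβ)).trans_eq ?_
  rw [setIntegral_const, smul_eq_mul]

lemma Zso_div_Zfull_le (hβ : 0 ≤ β) {C : ℝ} (hC : 0 ≤ C) :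
    Zso L p β C / Zfull L p β ≤ exp (2 * β * L ^ 2) * (1 / (C * √p) / π) ^ (L ^ 2 - L) := by
  set δ := 1 / (C * √p)
  have hδ : 0 ≤ δ := by positivity
  have hsplit : (2 * π) ^ (L ^ 2) = (2 * π) ^ (L ^ 2 - L) * (2 * π) ^ L := by
    rw [← pow_add, Nat.sub_add_cancel (Nat.le_self_pow two_ne_zero L)]
  calc Zso L p β C / Zfull L p β
      ≤ (2 * δ) ^ (L ^ 2 - L) * (2 * π) ^ L * exp (2 * β * L ^ 2) / (2 * π) ^ (L ^ 2) := by
        refine div_le_div₀ (by positivity) ((Zso_le_measureReal_mul_exp L p hβ C).trans ?_)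
          (by positivity) (pow_two_pi_le_Zfull L p hβ)
        gcongr
        exact measureReal_strongOrderSet_le L hδ
    _ = exp (2 * β * L ^ 2) * (δ / π) ^ (L ^ 2 - L) := by
        rw [hsplit, div_pow, mul_pow, mul_pow 2 π]
        field_simp
        ring

lemma rpow_Zso_div_Zfull_le (hβ : 0 ≤ β) {C : ℝ} (hC : 0 ≤ C) :
    (Zso L p β C / Zfull L p β) ^ ((L : ℝ) ^ 2)⁻¹ ≤
      exp (2 * β) * (1 / (C * √p) / π) ^ (1 - (L : ℝ)⁻¹) := by
  have hL : (L : ℝ) ≠ 0 := Nat.cast_ne_zero.2 (NeZero.ne L)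
  have hq : 0 ≤ 1 / (C * √p) / π := by positivity
  calc (Zso L p β C / Zfull L p β) ^ ((L : ℝ) ^ 2)⁻¹
      ≤ (exp (2 * β * L ^ 2) * (1 / (C * √p) / π) ^ (L ^ 2 - L)) ^ ((L : ℝ) ^ 2)⁻¹ :=
        rpow_le_rpow (Zso_div_Zfull_nonneg L p hβ C) (Zso_div_Zfull_le L p hβ hC) (by positivity)
    _ = exp (2 * β) * (1 / (C * √p) / π) ^ (1 - (L : ℝ)⁻¹) := by
        rw [mul_rpow (exp_pos _).le (by positivity), ← exp_mul,
          ← rpow_natCast (1 / (C * √p) / π), ← rpow_mul hq,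
          Nat.cast_sub (Nat.le_self_pow two_ne_zero L)]
        congr 2 <;> push_cast <;> field_simp

end PartitionFunction

theorem pso_bound_general (p : ℕ) (β C : ℝ)
    (hβ : 0 ≤ β) (hC : 1 < C) :
    limsup
        (fun k : ℕ =>
          (Zso (k + 1) p β C / Zfull (k + 1) p β) ^ ((((k : ℝ) + 1) ^ 2)⁻¹))
        atTop ≤
      (1 / π) * Real.exp (2 * β) / (C * Real.sqrt p) := by
  set q := 1 / (C * √p) / π
  have hbound : ∀ k : ℕ, (Zso (k + 1) p β C / Zfull (k + 1) p β) ^ ((((k : ℝ) + 1) ^ 2)⁻¹) ≤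
      exp (2 * β) * q ^ (1 - ((k : ℝ) + 1)⁻¹) := fun k => by
    exact_mod_cast rpow_Zso_div_Zfull_le (k + 1) p hβ (zero_le_one.trans hC.le)
  have hlim : Tendsto (fun k : ℕ => exp (2 * β) * q ^ (1 - ((k : ℝ) + 1)⁻¹)) atTop
      (𝓝 (exp (2 * β) * q)) := by
    have hexp : Tendsto (fun k : ℕ => 1 - ((k : ℝ) + 1)⁻¹) atTop (𝓝 1) := by
      simpa using tendsto_const_nhds.sub (tendsto_one_div_add_atTop_nhds_zero_nat (𝕜 := ℝ))
    simpa using (tendsto_const_nhds.rpow hexp (Or.inr one_pos)).const_mul (exp (2 * β))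
  calc _ ≤ limsup (fun k : ℕ => exp (2 * β) * q ^ (1 - ((k : ℝ) + 1)⁻¹)) atTop :=
        limsup_le_limsup (.of_forall hbound)
          (isCoboundedUnder_le_of_le atTop fun k => rpow_nonneg (Zso_div_Zfull_nonneg _ p hβ C) _)
          hlim.isBoundedUnder_le
    _ = (1 / π) * Real.exp (2 * β) / (C * Real.sqrt p) := by
        rw [hlim.limsup_eq]
        ring

/-- The disseminated strong-order probability
`𝔭_β(G_so) = lim_L (Z_L^{so}/Z_L)^{1/|T_L|}` satisfies
`𝔭_β(G_so) ≤ (1/π) e^{2β}/(C√p)`. -/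
theorem pso_bound (p : ℕ) (hp : 1 ≤ p) (β C : ℝ)
    (hβ : 0 ≤ β) (hC : 1 < C) (hCp : C ≤ Real.sqrt p) :
    limsup
        (fun k : ℕ =>
          (Zso (k + 1) p β C / Zfull (k + 1) p β) ^ ((((k : ℝ) + 1) ^ 2)⁻¹))
        atTop ≤
      (1 / π) * Real.exp (2 * β) / (C * Real.sqrt p) :=
  pso_bound_general p β C hβ hC

end
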